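/- For every R and every overlap monomial G on R replicas, the function λ ↦ E_{λh}(G) is infinitely differentiable on ℝ and all of its odd-order derivatives at λ = 0 vanish. -/

import Mathlib

open MeasureTheory ProbabilityTheory Finset

/-- The deformed random Gibbs weight `μ_J^λ(σ) = μ_J(σ)e^{λh(σ,J)} / Σ_τ μ_J(τ)e^{λh(τ,J)}`. -/
noncomputable def gibbs {Ωσ ΩJ : Type*} [Fintype Ωσ] (μ : ΩJ → Ωσ → ℝ)
    (h : Ωσ → ΩJ → ℝ) (lam : ℝ) (J : ΩJ) (σ : Ωσ) : ℝ :=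
  μ J σ * Real.exp (lam * h σ J) / ∑ τ, μ J τ * Real.exp (lam * h τ J)

/-- The deformed quenched expectation `E_{λh}(F)` of a function `F` on `R` replicas. -/
noncomputable def qE {Ωσ ΩJ : Type*} [Fintype Ωσ] [MeasurableSpace ΩJ] (ν : Measure ΩJ)
    (μ : ΩJ → Ωσ → ℝ) (h : Ωσ → ΩJ → ℝ) (lam : ℝ) (R : ℕ)
    (F : (Fin R → Ωσ) → ΩJ → ℝ) : ℝ :=
  ∫ J, ∑ σ : Fin R → Ωσ, F σ J * ∏ r, gibbs μ h lam J (σ r) ∂ν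

/-- The overlap monomial `σ ↦ ∏_{1 ≤ i < j ≤ R} c_{σ_i,σ_j}^{m_{i,j}}` on `R` replicas. -/
def overlapMonomial {Ωσ : Type*} [Fintype Ωσ] (c : Ωσ → Ωσ → ℝ) (R : ℕ)
    (m : Fin R → Fin R → ℕ) : (Fin R → Ωσ) → ℝ := fun σ =>
  ∏ p ∈ Finset.univ.filter (fun p : Fin R × Fin R => p.1 < p.2), c (σ p.1) (σ p.2) ^ m p.1 p.2

/-- For `G` an overlap function on `R` replicas, the overlap polynomial `ΔG` on `R+2`
replicas: `(ΔG)(σ) = (2 Σ_{1≤i<j≤R} c_{i,j} − 2R Σ_{i=1}^R c_{i,R+1} + R(R+1) c_{R+1,R+2})·G(σ)`. -/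
def covDelta {Ωσ : Type*} [Fintype Ωσ] (c : Ωσ → Ωσ → ℝ) (R : ℕ)
    (G : (Fin R → Ωσ) → ℝ) : (Fin (R + 2) → Ωσ) → ℝ := fun σ =>
  (2 * ∑ p ∈ Finset.univ.filter (fun p : Fin R × Fin R => p.1 < p.2),
        c (σ (Fin.castAdd 2 p.1)) (σ (Fin.castAdd 2 p.2))
    - 2 * R * ∑ i : Fin R, c (σ (Fin.castAdd 2 i)) (σ ⟨R, by omega⟩)
    + R * (R + 1) * c (σ ⟨R, by omega⟩) (σ ⟨R + 1, by omega⟩))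
  * G (fun i => σ (Fin.castAdd 2 i))

/-!
Write `f λ = E_{λh}(G)`. Flipping the sign of `λ` is the same as replacing `h` by `-h`, and
`(-h, μ)` has the same joint law as `(h, μ)`: `h` is a centered Gaussian vector, hence symmetric,
and it is independent of `μ`. So `f` is even, and the odd derivatives of an even function vanish
at `0`.

For smoothness, the integrand of `f` is a polynomial in the Gibbs weights `μ_J^λ(τ)` and the
fields `h τ`, and differentiating in `λ` maps such polynomials to such polynomials, since
`∂_λ μ_J^λ(τ) = μ_J^λ(τ) (h τ - Σ_s μ_J^λ(s) h s)`. Every one of them is dominated by a power of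
`1 + ‖h‖`, which is integrable because Gaussian vectors have moments of all orders, so one may
differentiate under the integral sign as often as one likes.
-/

open scoped ContDiff

theorem Function.Even.iteratedDeriv_eq_zero_of_odd {F : Type*} [NormedAddCommGroup F]
    [NormedSpace ℝ F] {f : ℝ → F} (hf : Function.Even f) {k : ℕ} (hk : Odd k) :
    iteratedDeriv k f 0 = 0 := by
  have h := iteratedDeriv_comp_neg k f 0
  rw [show (fun x => f (-x)) = f from funext hf, neg_zero, hk.neg_one_pow, neg_one_smul] at h
  have h2 : (2 : ℝ) • iteratedDeriv k f 0 = 0 := by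
    rw [two_smul]; nth_rewrite 2 [h]; exact add_neg_cancel _
  simpa using h2

section ParametricIntegral

variable {α : Type*} [MeasurableSpace α] {ν : Measure α} {F : ℕ → ℝ → α → ℝ}
  {bound : ℕ → α → ℝ}
  (hmeas : ∀ k x, AEStronglyMeasurable (F k x) ν)
  (hbound : ∀ k x a, ‖F k x a‖ ≤ bound k a) (hint : ∀ k, Integrable (bound k) ν)
  (hderiv : ∀ k x a, HasDerivAt (F k · a) (F (k + 1) x a) x)
include hmeas hbound hint hderiv

theorem hasDerivAt_integral_of_hasDerivAt_seq (k : ℕ) (x : ℝ) :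
    HasDerivAt (fun y => ∫ a, F k y a ∂ν) (∫ a, F (k + 1) x a ∂ν) x :=
  (hasDerivAt_integral_of_dominated_loc_of_deriv_le (bound := bound (k + 1)) Filter.univ_mem
    (.of_forall (hmeas k)) ((hint k).mono' (hmeas k x) (.of_forall (hbound k x)))
    (hmeas (k + 1) x) (.of_forall fun a y _ => hbound (k + 1) y a) (hint (k + 1))
    (.of_forall fun a y _ => hderiv k y a)).2

theorem iteratedDeriv_integral_of_hasDerivAt_seq (k : ℕ) :
    iteratedDeriv k (fun x => ∫ a, F 0 x a ∂ν) = fun x => ∫ a, F k x a ∂ν := by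
  induction k with
  | zero => exact iteratedDeriv_zero
  | succ k ih =>
    rw [iteratedDeriv_succ, ih]
    exact funext fun x =>
      (hasDerivAt_integral_of_hasDerivAt_seq hmeas hbound hint hderiv k x).deriv

theorem contDiff_integral_of_hasDerivAt_seq : ContDiff ℝ ∞ (fun x => ∫ a, F 0 x a ∂ν) :=
  contDiff_of_differentiable_iteratedDeriv fun k _ => by
    rw [iteratedDeriv_integral_of_hasDerivAt_seq hmeas hbound hint hderiv k]
    exact fun x =>
      (hasDerivAt_integral_of_hasDerivAt_seq hmeas hbound hint hderiv k x).differentiableAt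

end ParametricIntegral

theorem MvPolynomial.exists_abs_eval_le {σ : Type*} (p : MvPolynomial σ ℝ) :
    ∃ C n, 0 ≤ C ∧ ∀ b, 1 ≤ b → ∀ x : σ → ℝ, (∀ i, |x i| ≤ b) → |eval x p| ≤ C * b ^ n := by
  induction p using MvPolynomial.induction_on with
  | C a => exact ⟨|a|, 0, abs_nonneg a, fun b _ x _ => by simp⟩
  | add p q hp hq =>
    obtain ⟨C₁, n₁, hC₁, hp⟩ := hp
    obtain ⟨C₂, n₂, hC₂, hq⟩ := hq
    refine ⟨C₁ + C₂, max n₁ n₂, by positivity, fun b hb x hx => ?_⟩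
    have h₁ : b ^ n₁ ≤ b ^ max n₁ n₂ := pow_le_pow_right₀ hb (le_max_left _ _)
    have h₂ : b ^ n₂ ≤ b ^ max n₁ n₂ := pow_le_pow_right₀ hb (le_max_right _ _)
    calc |eval x (p + q)| ≤ C₁ * b ^ n₁ + C₂ * b ^ n₂ := by
          rw [map_add]
          exact (abs_add_le _ _).trans (add_le_add (hp b hb x hx) (hq b hb x hx))
      _ ≤ (C₁ + C₂) * b ^ max n₁ n₂ := by nlinarith
  | mul_X p i hp =>
    obtain ⟨C, n, hC, hp⟩ := hp
    refine ⟨C, n + 1, hC, fun b hb x hx => ?_⟩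
    rw [map_mul, eval_X, abs_mul, pow_succ, ← mul_assoc]
    exact mul_le_mul (hp b hb x hx) (hx i) (abs_nonneg _) (by positivity)

theorem exists_map_dual_eq_gaussianReal {Ω ι : Type*} [MeasurableSpace Ω] [Fintype ι]
    {ν : Measure Ω} {X : Ω → ι → ℝ} (hX : Measurable X)
    (hgauss : ∀ a : ι → ℝ, ∃ v, ν.map (fun x => ∑ i, a i * X x i) = gaussianReal 0 v)
    (L : StrongDual ℝ (ι → ℝ)) : ∃ v, (ν.map X).map L = gaussianReal 0 v := by
  classical
  obtain ⟨v, hv⟩ := hgauss fun i => L fun j => if i = j then 1 else 0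
  refine ⟨v, ?_⟩
  rw [Measure.map_map L.continuous.measurable hX, ← hv]
  congr 1
  funext x
  simpa [mul_comm] using L.toLinearMap.pi_apply_eq_sum_univ (X x)

section GaussianVector

variable {E : Type*} [NormedAddCommGroup E] [NormedSpace ℝ E] [MeasurableSpace E] [BorelSpace E]
  [SecondCountableTopology E] [CompleteSpace E]

theorem map_neg_eq_self_of_map_dual_eq_gaussianReal {P : Measure E} [IsFiniteMeasure P]
    (hP : ∀ L : StrongDual ℝ E, ∃ v, P.map L = gaussianReal 0 v) :
    P.map (fun x => -x) = P := by
  refine Measure.ext_of_charFunDual (funext fun L => ?_)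
  obtain ⟨v, hv⟩ := hP L
  have hmap : (P.map fun x => -x).map L = P.map L := by
    rw [Measure.map_map L.continuous.measurable measurable_neg,
      show (L ∘ fun x => -x) = (fun y => -y) ∘ L from funext fun x => map_neg L x,
      ← Measure.map_map measurable_neg L.continuous.measurable, hv, gaussianReal_map_neg,
      neg_zero]
  rw [charFunDual_eq_charFun_map_one, charFunDual_eq_charFun_map_one, hmap]

theorem integrable_one_add_norm_pow {Ω : Type*} [MeasurableSpace Ω] {ν : Measure Ω}
    {X : Ω → E} (hX : Measurable X) [IsGaussian (ν.map X)] (n : ℕ) :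
    Integrable (fun x => (1 + ‖X x‖) ^ n) ν := by
  have hid : MemLp id n (ν.map X) := IsGaussian.memLp_id _ n (by simp)
  have hmem : MemLp (fun x : E => 1 + ‖x‖) n (ν.map X) := (memLp_const (1 : ℝ)).add hid.norm
  refine (hmem.integrable_norm_pow'.comp_measurable hX).congr (.of_forall fun x => ?_)
  simp only [Function.comp_apply, Real.norm_eq_abs]
  rw [abs_of_nonneg (by positivity)]

end GaussianVector

theorem IndepFun.map_prodMk_eq_of_map_eq {Ω β γ : Type*} [MeasurableSpace Ω]
    [MeasurableSpace β] [MeasurableSpace γ] {ν : Measure Ω} [IsFiniteMeasure ν]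
    {X X' : Ω → β} {Y : Ω → γ}
    (hX : AEMeasurable X ν) (hX' : AEMeasurable X' ν) (hY : AEMeasurable Y ν)
    (hXY : IndepFun X Y ν) (hX'Y : IndepFun X' Y ν) (hlaw : ν.map X = ν.map X') :
    ν.map (fun x => (X x, Y x)) = ν.map (fun x => (X' x, Y x)) := by
  rw [(indepFun_iff_map_prod_eq_prod_map_map hX hY).1 hXY,
    (indepFun_iff_map_prod_eq_prod_map_map hX' hY).1 hX'Y, hlaw]

section GibbsWeight

variable {Ωσ ΩJ : Type*} [Fintype Ωσ] {μ : ΩJ → Ωσ → ℝ} {h : Ωσ → ΩJ → ℝ}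
  (hμpos : ∀ J σ, 0 ≤ μ J σ) (hμsum : ∀ J, ∑ σ, μ J σ = 1)
include hμpos hμsum

theorem sum_mul_exp_pos (lam : ℝ) (J : ΩJ) : 0 < ∑ τ, μ J τ * Real.exp (lam * h τ J) := by
  obtain ⟨τ, -, hτ⟩ := exists_ne_zero_of_sum_ne_zero (by rw [hμsum J]; exact one_ne_zero)
  exact sum_pos' (fun s _ => by have := hμpos J s; positivity)
    ⟨τ, mem_univ τ, mul_pos ((hμpos J τ).lt_of_ne' hτ) (Real.exp_pos _)⟩

theorem gibbs_nonneg (lam : ℝ) (J : ΩJ) (σ : Ωσ) : 0 ≤ gibbs μ h lam J σ :=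
  div_nonneg (mul_nonneg (hμpos J σ) (Real.exp_pos _).le)
    (sum_mul_exp_pos hμpos hμsum lam J).le

theorem gibbs_le_one (lam : ℝ) (J : ΩJ) (σ : Ωσ) : gibbs μ h lam J σ ≤ 1 := by
  rw [gibbs, div_le_one (sum_mul_exp_pos hμpos hμsum lam J)]
  exact single_le_sum (f := fun τ => μ J τ * Real.exp (lam * h τ J))
    (fun τ _ => mul_nonneg (hμpos J τ) (Real.exp_pos _).le) (mem_univ σ)

theorem hasDerivAt_gibbs (lam : ℝ) (J : ΩJ) (σ : Ωσ) :
    HasDerivAt (fun l => gibbs μ h l J σ)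
      (gibbs μ h lam J σ * (h σ J - ∑ τ, gibbs μ h lam J τ * h τ J)) lam := by
  have hterm : ∀ τ, HasDerivAt (fun l => μ J τ * Real.exp (l * h τ J))
      (μ J τ * Real.exp (lam * h τ J) * h τ J) lam := fun τ => by
    simpa [mul_assoc] using ((hasDerivAt_mul_const (h τ J)).exp).const_mul (μ J τ)
  have hZ := sum_mul_exp_pos (h := h) hμpos hμsum lam J
  refine ((hterm σ).fun_div (HasDerivAt.fun_sum fun τ _ => hterm τ) hZ.ne').congr_deriv ?_
  simp only [gibbs, div_mul_eq_mul_div, ← sum_div]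
  field_simp

end GibbsWeight

section Symmetry

variable {Ωσ ΩJ : Type*} [Fintype Ωσ] [MeasurableSpace ΩJ] {ν : Measure ΩJ}
  {μ : ΩJ → Ωσ → ℝ} {h : Ωσ → ΩJ → ℝ}

theorem qE_neg (lam : ℝ) (R : ℕ) (F : (Fin R → Ωσ) → ΩJ → ℝ) :
    qE ν μ h (-lam) R F = qE ν μ (fun σ J => -h σ J) lam R F := by
  simp only [qE, gibbs, neg_mul, mul_neg]

theorem qE_eq_of_map_eq {h' : Ωσ → ΩJ → ℝ} (hμ : Measurable fun J σ => μ J σ)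
    (hh : Measurable fun J σ => h σ J) (hh' : Measurable fun J σ => h' σ J)
    (hlaw : ν.map (fun J => ((fun σ => h σ J), fun σ => μ J σ))
      = ν.map (fun J => ((fun σ => h' σ J), fun σ => μ J σ)))
    (lam : ℝ) (R : ℕ) (G : (Fin R → Ωσ) → ℝ) :
    qE ν μ h lam R (fun σ _ => G σ) = qE ν μ h' lam R (fun σ _ => G σ) := by
  let Ψ : (Ωσ → ℝ) × (Ωσ → ℝ) → ℝ := fun p => ∑ σ : Fin R → Ωσ, G σ *
    ∏ r, p.2 (σ r) * Real.exp (lam * p.1 (σ r)) / ∑ τ, p.2 τ * Real.exp (lam * p.1 τ)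
  have hΨ : Measurable Ψ := by fun_prop
  change ∫ J, Ψ ((fun σ => h σ J), fun σ => μ J σ) ∂ν
    = ∫ J, Ψ ((fun σ => h' σ J), fun σ => μ J σ) ∂ν
  rw [← integral_map (hh.prodMk hμ).aemeasurable hΨ.aestronglyMeasurable,
    ← integral_map (hh'.prodMk hμ).aemeasurable hΨ.aestronglyMeasurable, hlaw]

theorem qE_even [IsFiniteMeasure ν] (hμ : Measurable fun J σ => μ J σ)
    (hh : Measurable fun J σ => h σ J)
    (hsymm : (ν.map fun J σ => h σ J).map (fun x => -x) = ν.map fun J σ => h σ J)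
    (hindep : IndepFun (fun J σ => h σ J) (fun J σ => μ J σ) ν)
    (R : ℕ) (G : (Fin R → Ωσ) → ℝ) :
    Function.Even fun lam => qE ν μ h lam R fun σ _ => G σ := by
  intro lam
  have hneg : Measurable fun J σ => -h σ J := hh.neg
  dsimp only
  rw [qE_neg]
  refine qE_eq_of_map_eq hμ hneg hh (IndepFun.map_prodMk_eq_of_map_eq hneg.aemeasurable
    hh.aemeasurable hμ.aemeasurable (hindep.comp measurable_neg measurable_id) hindep ?_) lam R G
  rw [← hsymm, Measure.map_map measurable_neg hh]
  rfl

end Symmetry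

section Smoothness

open MvPolynomial

variable {Ωσ ΩJ : Type*} [Fintype Ωσ] {μ : ΩJ → Ωσ → ℝ} {h : Ωσ → ΩJ → ℝ}

noncomputable def gibbsEval (μ : ΩJ → Ωσ → ℝ) (h : Ωσ → ΩJ → ℝ) (lam : ℝ) (J : ΩJ) :
    Ωσ ⊕ Ωσ → ℝ :=
  Sum.elim (gibbs μ h lam J) (fun τ => h τ J)

variable (Ωσ) in
noncomputable def gibbsDeriv :
    Derivation ℝ (MvPolynomial (Ωσ ⊕ Ωσ) ℝ) (MvPolynomial (Ωσ ⊕ Ωσ) ℝ) :=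
  mkDerivation ℝ <| Sum.elim
    (fun τ => X (.inl τ) * (X (.inr τ) - ∑ s, X (.inl s) * X (.inr s))) 0

noncomputable def replicaPolynomial {R : ℕ} (G : (Fin R → Ωσ) → ℝ) :
    MvPolynomial (Ωσ ⊕ Ωσ) ℝ :=
  ∑ σ : Fin R → Ωσ, C (G σ) * ∏ r, X (.inl (σ r))

theorem measurable_gibbsEval [MeasurableSpace ΩJ] (hμ : ∀ σ, Measurable fun J => μ J σ)
    (hh : ∀ σ, Measurable (h σ)) (lam : ℝ) : Measurable (gibbsEval μ h lam) := by
  refine measurable_pi_lambda _ fun v => ?_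
  cases v with
  | inl σ => simp only [gibbsEval, Sum.elim_inl, gibbs]; fun_prop
  | inr σ => exact hh σ

variable (hμpos : ∀ J σ, 0 ≤ μ J σ) (hμsum : ∀ J, ∑ σ, μ J σ = 1)
include hμpos hμsum

theorem abs_gibbsEval_le (lam : ℝ) (J : ΩJ) (v : Ωσ ⊕ Ωσ) :
    |gibbsEval μ h lam J v| ≤ 1 + ‖fun σ => h σ J‖ := by
  cases v with
  | inl σ =>
    rw [gibbsEval, Sum.elim_inl, abs_of_nonneg (gibbs_nonneg hμpos hμsum lam J σ)]
    linarith [gibbs_le_one (h := h) hμpos hμsum lam J σ, norm_nonneg fun σ => h σ J]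
  | inr σ =>
    have := norm_le_pi_norm (fun σ => h σ J) σ
    rw [Real.norm_eq_abs] at this
    simp only [gibbsEval, Sum.elim_inr]
    linarith

theorem hasDerivAt_eval_gibbsEval (lam : ℝ) (J : ΩJ) (q : MvPolynomial (Ωσ ⊕ Ωσ) ℝ) :
    HasDerivAt (fun l => eval (gibbsEval μ h l J) q)
      (eval (gibbsEval μ h lam J) (gibbsDeriv Ωσ q)) lam := by
  induction q using MvPolynomial.induction_on with
  | C a => simpa [gibbsDeriv] using hasDerivAt_const lam a
  | add p q hp hq => simpa only [map_add] using hp.fun_add hq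
  | mul_X p v hp =>
    have hX : HasDerivAt (fun l => gibbsEval μ h l J v)
        (eval (gibbsEval μ h lam J) (gibbsDeriv Ωσ (X v))) lam := by
      cases v with
      | inl σ => simpa [gibbsDeriv, gibbsEval] using hasDerivAt_gibbs hμpos hμsum lam J σ
      | inr σ => simpa [gibbsDeriv, gibbsEval] using hasDerivAt_const lam (h σ J)
    simp only [Derivation.leibniz, map_mul, map_add, eval_X, smul_eq_mul]
    exact (hp.fun_mul hX).congr_deriv (by ring)

theorem contDiff_integral_eval_gibbsEval [MeasurableSpace ΩJ] {ν : Measure ΩJ}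
    (hμ : ∀ σ, Measurable fun J => μ J σ) (hh : ∀ σ, Measurable (h σ))
    (hmom : ∀ n : ℕ, Integrable (fun J => (1 + ‖fun σ => h σ J‖) ^ n) ν)
    (q : MvPolynomial (Ωσ ⊕ Ωσ) ℝ) :
    ContDiff ℝ ∞ fun lam => ∫ J, eval (gibbsEval μ h lam J) q ∂ν := by
  choose C n _ hbound using fun k => ((gibbsDeriv Ωσ)^[k] q).exists_abs_eval_le
  refine contDiff_integral_of_hasDerivAt_seq (ν := ν)
    (F := fun k lam J => eval (gibbsEval μ h lam J) ((gibbsDeriv Ωσ)^[k] q))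
    (bound := fun k J => C k * (1 + ‖fun σ => h σ J‖) ^ n k)
    (fun k lam => ((continuous_eval _).measurable.comp
      (measurable_gibbsEval hμ hh lam)).aestronglyMeasurable)
    (fun k lam J => hbound k _ (by linarith [norm_nonneg fun σ => h σ J]) _
      (abs_gibbsEval_le hμpos hμsum lam J))
    (fun k => (hmom (n k)).const_mul (C k)) (fun k lam J => ?_)
  rw [Function.iterate_succ_apply']
  exact hasDerivAt_eval_gibbsEval hμpos hμsum lam J _

theorem contDiff_qE [MeasurableSpace ΩJ] {ν : Measure ΩJ}
    (hμ : ∀ σ, Measurable fun J => μ J σ) (hh : ∀ σ, Measurable (h σ))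
    (hmom : ∀ n : ℕ, Integrable (fun J => (1 + ‖fun σ => h σ J‖) ^ n) ν)
    (R : ℕ) (G : (Fin R → Ωσ) → ℝ) :
    ContDiff ℝ ∞ fun lam => qE ν μ h lam R fun σ _ => G σ := by
  have hpoly : ∀ lam J, eval (gibbsEval μ h lam J) (replicaPolynomial G)
      = ∑ σ : Fin R → Ωσ, G σ * ∏ r, gibbs μ h lam J (σ r) := fun lam J => by
    simp [replicaPolynomial, gibbsEval]
  simpa only [qE, hpoly] using
    contDiff_integral_eval_gibbsEval hμpos hμsum hμ hh hmom (replicaPolynomial G)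

end Smoothness

theorem qE_smooth_odd_derivs_vanish_general
    {Ωσ : Type} [Fintype Ωσ]
    {ΩJ : Type} [MeasurableSpace ΩJ] (ν : Measure ΩJ) [IsProbabilityMeasure ν]
    (μ : ΩJ → Ωσ → ℝ) (h : Ωσ → ΩJ → ℝ) (c : Ωσ → Ωσ → ℝ)
    (hμmeas : ∀ σ : Ωσ, Measurable fun J => μ J σ)
    (hμpos : ∀ J, ∀ σ : Ωσ, 0 ≤ μ J σ) (hμsum : ∀ J, ∑ σ : Ωσ, μ J σ = 1)
    (hhmeas : ∀ σ : Ωσ, Measurable (h σ))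
    (hgauss : ∀ a : Ωσ → ℝ, ∃ v : NNReal,
      Measure.map (fun J => ∑ σ : Ωσ, a σ * h σ J) ν = gaussianReal 0 v)
    (hindep : Indep (MeasurableSpace.comap (fun J => fun σ : Ωσ => h σ J) inferInstance)
      (MeasurableSpace.comap (fun J => fun σ : Ωσ => μ J σ) inferInstance) ν)
    (R : ℕ) (m : Fin R → Fin R → ℕ) :
    ContDiff ℝ (⊤ : ℕ∞) (fun lam => qE ν μ h lam R fun σ _ => overlapMonomial c R m σ) ∧
    ∀ k : ℕ, Odd k →
      iteratedDeriv k (fun lam => qE ν μ h lam R fun σ _ => overlapMonomial c R m σ) 0 = 0 := by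
  have hh : Measurable fun J σ => h σ J := measurable_pi_lambda _ hhmeas
  have hdual := exists_map_dual_eq_gaussianReal hh hgauss
  have : IsGaussian (ν.map fun J σ => h σ J) :=
    isGaussian_of_map_eq_gaussianReal fun L => ⟨0, hdual L⟩
  have heven := qE_even (measurable_pi_lambda _ hμmeas) hh
    (map_neg_eq_self_of_map_dual_eq_gaussianReal hdual) hindep R (overlapMonomial c R m)
  exact ⟨contDiff_qE hμpos hμsum hμmeas hhmeas (integrable_one_add_norm_pow hh) R _,
    fun k hk => heven.iteratedDeriv_eq_zero_of_odd hk⟩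

/-- For every overlap monomial `G` on `R` replicas, `λ ↦ E_{λh}(G)` is
infinitely differentiable on `ℝ` and all of its odd-order derivatives at `λ = 0` vanish. -/
theorem qE_smooth_odd_derivs_vanish
    {Ωσ : Type} [Fintype Ωσ] [Nonempty Ωσ]
    {ΩJ : Type} [MeasurableSpace ΩJ] (ν : Measure ΩJ) [IsProbabilityMeasure ν]
    (μ : ΩJ → Ωσ → ℝ) (h : Ωσ → ΩJ → ℝ) (c : Ωσ → Ωσ → ℝ)
    (hμmeas : ∀ σ : Ωσ, Measurable fun J => μ J σ)
    (hμpos : ∀ J, ∀ σ : Ωσ, 0 ≤ μ J σ) (hμsum : ∀ J, ∑ σ : Ωσ, μ J σ = 1)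
    (hhmeas : ∀ σ : Ωσ, Measurable (h σ))
    (hgauss : ∀ a : Ωσ → ℝ, ∃ v : NNReal,
      Measure.map (fun J => ∑ σ : Ωσ, a σ * h σ J) ν = gaussianReal 0 v)
    (hcov : ∀ σ σ' : Ωσ, c σ σ' = ∫ J, h σ J * h σ' J ∂ν)
    (hnorm : ∀ σ : Ωσ, c σ σ = 1)
    (hindep : Indep (MeasurableSpace.comap (fun J => fun σ : Ωσ => h σ J) inferInstance)
      (MeasurableSpace.comap (fun J => fun σ : Ωσ => μ J σ) inferInstance) ν)
    (R : ℕ) (m : Fin R → Fin R → ℕ) :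
    ContDiff ℝ (⊤ : ℕ∞) (fun lam => qE ν μ h lam R fun σ _ => overlapMonomial c R m σ) ∧
    ∀ k : ℕ, Odd k →
      iteratedDeriv k (fun lam => qE ν μ h lam R fun σ _ => overlapMonomial c R m σ) 0 = 0 :=
  qE_smooth_odd_derivs_vanish_general ν μ h c hμmeas hμpos hμsum hhmeas hgauss hindep R m
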